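/- arXiv:1112.2893 — 4 statements merged into one kernel-verified Lean document; each statement's English description precedes it below -/
import Mathlib

section
/- Let g, h : ℝ → ℝ be n-times differentiable. Then for every real x, dⁿ/dxⁿ [g(x²) h(x²)] = n! · Σ_{k=0}^{⌊n/2⌋} (2x)^{n−2k} / ((n−2k)! k!) · Σ_{j=0}^{n−k} C(n−k, j) · g^{(n−k−j)}(x²) · h^{(j)}(x²), a generalization of the Leibniz rule. -/
/-!
Put `F = g h`, so the function is `F (x²)`. Differentiating `(2x)^(n-2k) • F^(n-k)(x²)` gives
`(2x)^(n-2k+1) • F^(n-k+1)(x²) + 2(n-2k) • (2x)^(n-2k-1) • F^(n-k)(x²)`, so the coefficient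
`c n k` of `(2x)^(n-2k) • F^(n-k)(x²)` in the `n`-th derivative of `F (x²)` satisfies
`c (n+1) (k+1) = c n (k+1) + 2(n-2k) c n k`, whose solution is `n! / ((n-2k)! k!)`.
The Leibniz rule then expands each `F^(n-k)`.
-/

open Finset

def sqCompCoeff : ℕ → ℕ → ℕ
  | _, 0 => 1
  | 0, _ + 1 => 0
  | n + 1, k + 1 => sqCompCoeff n (k + 1) + 2 * (n - 2 * k) * sqCompCoeff n k

theorem sqCompCoeff_eq_zero {n k : ℕ} (h : n < 2 * k) : sqCompCoeff n k = 0 := by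
  induction n generalizing k with
  | zero => obtain _ | k := k <;> simp_all [sqCompCoeff]
  | succ n ih =>
    obtain _ | k := k
    · omega
    rw [sqCompCoeff, ih (by omega)]
    rcases Nat.lt_or_ge n (2 * k) with hk | hk
    · simp [ih hk]
    · simp [show n - 2 * k = 0 by omega]

theorem sqCompCoeff_mul_factorial_mul_factorial {n k : ℕ} (h : 2 * k ≤ n) :
    sqCompCoeff n k * ((n - 2 * k).factorial * k.factorial) = n.factorial := by
  induction n generalizing k with
  | zero =>
    obtain rfl : k = 0 := by omega
    rfl
  | succ n ih =>
    obtain _ | k := k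
    · simp [sqCompCoeff]
    have hk := ih (k := k) (by omega)
    rw [sqCompCoeff, Nat.factorial_succ n, Nat.factorial_succ k]
    rcases Nat.lt_or_ge n (2 * (k + 1)) with hn | hn
    · obtain rfl : n = 2 * k + 1 := by omega
      rw [sqCompCoeff_eq_zero hn, ← hk]
      simp only [show 2 * k + 1 + 1 - 2 * (k + 1) = 0 by omega,
        show 2 * k + 1 - 2 * k = 1 by omega]
      ring
    · have hk1 := ih hn
      obtain ⟨m, rfl⟩ : ∃ m, n = 2 * k + 2 + m := ⟨n - (2 * k + 2), by omega⟩
      simp only [show 2 * k + 2 + m + 1 - 2 * (k + 1) = m + 1 by omega,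
        show 2 * k + 2 + m - 2 * (k + 1) = m by omega,
        show 2 * k + 2 + m - 2 * k = m + 2 by omega, Nat.factorial_succ] at hk hk1 ⊢
      calc _ = (m + 1) * (sqCompCoeff _ (k + 1) * (m.factorial * ((k + 1) * k.factorial))) +
            2 * (k + 1) *
              (sqCompCoeff _ k * ((m + 1 + 1) * ((m + 1) * m.factorial) * k.factorial)) := by
            ring
        _ = _ := by rw [hk, hk1]; ring

theorem sum_sqCompCoeff_succ_smul {M : Type*} [AddCommMonoid M] (n : ℕ) (T : ℕ → M) :
    ∑ k ∈ range (n + 2), sqCompCoeff (n + 1) k • T k =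
      ∑ k ∈ range (n + 1), sqCompCoeff n k • (T k + (2 * (n - 2 * k)) • T (k + 1)) := by
  have hshift : ∑ k ∈ range (n + 1), sqCompCoeff n k • T k =
      T 0 + ∑ k ∈ range (n + 1), sqCompCoeff n (k + 1) • T (k + 1) := by
    rw [sum_range_succ (fun k => sqCompCoeff n (k + 1) • T (k + 1)),
      sqCompCoeff_eq_zero (show n < 2 * (n + 1) by omega), sum_range_succ']
    simp [sqCompCoeff, add_comm]
  simp only [smul_add, sum_add_distrib, hshift, smul_comm (sqCompCoeff n _), ← mul_smul]
  rw [sum_range_succ', add_assoc, ← sum_add_distrib]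
  simp [sqCompCoeff, add_smul, add_comm]

section
variable {𝕜 E : Type*} [NontriviallyNormedField 𝕜] [NormedAddCommGroup E] [NormedSpace 𝕜 E]

theorem HasDerivAt.two_mul_pow_smul_comp_sq {G : 𝕜 → E} {G' : E} {x : 𝕜}
    (hG : HasDerivAt G G' (x ^ 2)) (m : ℕ) :
    HasDerivAt (fun y => (2 * y) ^ m • G (y ^ 2))
      ((2 * x) ^ (m + 1) • G' + (2 * m) • (2 * x) ^ (m - 1) • G (x ^ 2)) x := by
  have hsq : HasDerivAt (fun y : 𝕜 => y ^ 2) (2 * x) x := by simpa using hasDerivAt_pow 2 x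
  have hpow : HasDerivAt (fun y : 𝕜 => (2 * y) ^ m) (m * (2 * x) ^ (m - 1) * 2) x := by
    simpa using ((hasDerivAt_id x).const_mul (2 : 𝕜)).fun_pow m
  refine (hpow.smul (hG.scomp x hsq)).congr_deriv ?_
  rw [smul_smul, ← pow_succ, ← Nat.cast_smul_eq_nsmul 𝕜, smul_smul, Function.comp_apply]
  congr 2
  push_cast
  ring

theorem iteratedDeriv_comp_sq {n : ℕ} {F : 𝕜 → E} (hF : ContDiff 𝕜 n F) (x : 𝕜) :
    iteratedDeriv n (fun t => F (t ^ 2)) x =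
      ∑ k ∈ range (n + 1),
        sqCompCoeff n k • (2 * x) ^ (n - 2 * k) • iteratedDeriv (n - k) F (x ^ 2) := by
  induction n generalizing x with
  | zero => simp [sqCompCoeff]
  | succ n ih =>
    have hterm : ∀ k ∈ range (n + 1), HasDerivAt
        (fun y => sqCompCoeff n k • (2 * y) ^ (n - 2 * k) • iteratedDeriv (n - k) F (y ^ 2))
        (sqCompCoeff n k • ((2 * x) ^ (n - 2 * k + 1) • iteratedDeriv (n - k + 1) F (x ^ 2) +
          (2 * (n - 2 * k)) • (2 * x) ^ (n - 2 * k - 1) • iteratedDeriv (n - k) F (x ^ 2)))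
        x := by
      intro k _
      have hG :=
        (hF.differentiable_iteratedDeriv (n - k) (by norm_cast; omega) (x ^ 2)).hasDerivAt
      rw [← iteratedDeriv_succ] at hG
      exact (hG.two_mul_pow_smul_comp_sq _).const_smul (sqCompCoeff n k)
    rw [iteratedDeriv_succ, funext (ih (hF.of_le (by norm_cast; omega))),
      (HasDerivAt.fun_sum hterm).deriv, sum_sqCompCoeff_succ_smul]
    refine sum_congr rfl fun k _ => ?_
    rcases Nat.lt_or_ge n (2 * k) with hk | hk
    · simp [sqCompCoeff_eq_zero hk]
    rw [show n + 1 - 2 * k = n - 2 * k + 1 by omega, show n + 1 - k = n - k + 1 by omega,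
      show n + 1 - 2 * (k + 1) = n - 2 * k - 1 by omega, Nat.add_sub_add_right]
end

theorem iteratedDeriv_mul_comp_sq (n : ℕ) (g h : ℝ → ℝ)
    (hg : ContDiff ℝ n g) (hh : ContDiff ℝ n h) (x : ℝ) :
    iteratedDeriv n (fun t => g (t ^ 2) * h (t ^ 2)) x =
      (n.factorial : ℝ) * ∑ k ∈ Finset.range (n / 2 + 1),
        (2 * x) ^ (n - 2 * k) / (((n - 2 * k).factorial : ℝ) * k.factorial) *
          ∑ j ∈ Finset.range (n - k + 1),
            ((n - k).choose j : ℝ) * iteratedDeriv (n - k - j) g (x ^ 2) *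
              iteratedDeriv j h (x ^ 2) := by
  have hleibniz (m : ℕ) (hm : m ≤ n) : iteratedDeriv m (fun y => g y * h y) (x ^ 2) =
      ∑ j ∈ range (m + 1),
        (m.choose j : ℝ) * iteratedDeriv (m - j) g (x ^ 2) * iteratedDeriv j h (x ^ 2) := by
    rw [← Pi.mul_def, mul_comm,
      iteratedDeriv_mul ((hh.of_le (by exact_mod_cast hm)).contDiffAt)
        ((hg.of_le (by exact_mod_cast hm)).contDiffAt)]
    exact sum_congr rfl fun j _ => by ring
  have hcoeff (k : ℕ) (hk : 2 * k ≤ n) : (sqCompCoeff n k : ℝ) =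
      n.factorial / ((n - 2 * k).factorial * k.factorial) := by
    rw [eq_div_iff (by positivity)]
    exact_mod_cast sqCompCoeff_mul_factorial_mul_factorial hk
  rw [iteratedDeriv_comp_sq (hg.mul hh), mul_sum,
    ← sum_subset (range_subset_range.2 (by omega : n / 2 + 1 ≤ n + 1)) fun k _ hk => ?_]
  · refine sum_congr rfl fun k hk => ?_
    have hk : 2 * k ≤ n := by rw [mem_range] at hk; omega
    rw [hleibniz (n - k) (by omega), nsmul_eq_mul, smul_eq_mul, hcoeff k hk]
    ring
  · have hk : n < 2 * k := by rw [mem_range] at hk; omega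
    simp [sqCompCoeff_eq_zero hk]
end

section
/- For all real numbers a, b, x and every natural number n, dⁿ/dxⁿ e^{a x² + b x} = H_n^{(2)}(2ax + b, a) · e^{a x² + b x}, where H_n^{(2)} is the two-variable Hermite–Kampé de Fériet polynomial. -/
/-!
The Hermite–Kampé de Fériet polynomials satisfy the Appell rule `∂ₓ H_n = n H_{n-1}` and the
recurrence `H_{n+1} = x H_n + 2 y n H_{n-1}`. Hence if the `n`-th derivative of `exp q`, with
`q t = a t² + b t`, is `H_n(q', a) exp q`, then differentiating once more gives
`(2 a n H_{n-1}(q', a) + q' H_n(q', a)) exp q = H_{n+1}(q', a) exp q`.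
-/

open Finset

/-- The two-variable Hermite–Kampé de Fériet polynomials. -/
noncomputable def hermiteKdF2 (n : ℕ) (x y : ℝ) : ℝ :=
  (n.factorial : ℝ) * ∑ k ∈ Finset.range (n / 2 + 1),
    x ^ (n - 2 * k) * y ^ k / ((n - 2 * k).factorial * k.factorial)

theorem Nat.succ_descFactorial_succ_eq_add (n k : ℕ) :
    (n + 1).descFactorial (k + 1) = n.descFactorial (k + 1) + (k + 1) * n.descFactorial k := by
  rw [succ_descFactorial_succ, descFactorial_succ]
  rcases le_or_gt k n with h | h
  · rw [← add_mul]
    congr 1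
    omega
  · simp [descFactorial_eq_zero_iff_lt.2 h]

/-- Since `n! / ((n - 2k)! k!) = n.descFactorial (2k) / k!` vanishes for `2k > n`, sums of these
terms may run over any range past `n / 2`, and the truncated exponent `n - 2k` does no harm. -/
noncomputable def hermiteKdF2Term (n k : ℕ) (x y : ℝ) : ℝ :=
  n.descFactorial (2 * k) / k.factorial * x ^ (n - 2 * k) * y ^ k

theorem hermiteKdF2_eq_sum_range {n N : ℕ} (hN : n / 2 < N) (x y : ℝ) :
    hermiteKdF2 n x y = ∑ k ∈ range N, hermiteKdF2Term n k x y := by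
  have hterm : ∀ k ∈ range (n / 2 + 1), (n.factorial : ℝ) *
      (x ^ (n - 2 * k) * y ^ k / ((n - 2 * k).factorial * k.factorial)) =
      hermiteKdF2Term n k x y := by
    intro k hk
    have h2k : 2 * k ≤ n := by rw [mem_range] at hk; omega
    rw [hermiteKdF2Term, ← Nat.factorial_mul_descFactorial h2k]
    push_cast
    field_simp
  rw [hermiteKdF2, mul_sum, sum_congr rfl hterm]
  refine sum_subset (range_subset_range.2 (by omega)) fun k _ hk => ?_
  rw [mem_range] at hk
  simp [hermiteKdF2Term, Nat.descFactorial_eq_zero_iff_lt.2 (show n < 2 * k by omega)]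

theorem hasDerivAt_hermiteKdF2Term (n k : ℕ) (x y : ℝ) :
    HasDerivAt (fun x => hermiteKdF2Term n k x y) (n * hermiteKdF2Term (n - 1) k x y) x := by
  have hcoeff : (n.descFactorial (2 * k) * (n - 2 * k : ℕ) : ℝ) =
      n * (n - 1).descFactorial (2 * k) := by
    rcases n with _ | n
    · simp
    · rw [← Nat.cast_mul, mul_comm, ← Nat.descFactorial_succ, Nat.succ_descFactorial_succ]
      simp
  refine (((hasDerivAt_pow (n - 2 * k) x).const_mul
    ((n.descFactorial (2 * k) : ℝ) / k.factorial)).mul_const (y ^ k)).congr_deriv ?_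
  rw [hermiteKdF2Term, show n - 1 - 2 * k = n - 2 * k - 1 by omega]
  linear_combination (x ^ (n - 2 * k - 1) * y ^ k / k.factorial) * hcoeff

theorem hasDerivAt_hermiteKdF2 (n : ℕ) (x y : ℝ) :
    HasDerivAt (fun x => hermiteKdF2 n x y) (n * hermiteKdF2 (n - 1) x y) x := by
  have hsum : (fun x => hermiteKdF2 n x y) =
      fun x => ∑ k ∈ range (n + 1), hermiteKdF2Term n k x y :=
    funext fun x => hermiteKdF2_eq_sum_range (by omega) x y
  rw [hsum, hermiteKdF2_eq_sum_range (N := n + 1) (by omega), mul_sum]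
  exact HasDerivAt.fun_sum fun k _ => hasDerivAt_hermiteKdF2Term n k x y

theorem hermiteKdF2Term_succ_zero (n : ℕ) (x y : ℝ) :
    hermiteKdF2Term (n + 1) 0 x y = x * hermiteKdF2Term n 0 x y := by
  simp [hermiteKdF2Term, pow_succ, mul_comm]

theorem hermiteKdF2Term_succ_succ (n k : ℕ) (x y : ℝ) :
    hermiteKdF2Term (n + 1) (k + 1) x y =
      x * hermiteKdF2Term n (k + 1) x y + 2 * y * n * hermiteKdF2Term (n - 1) k x y := by
  rcases n with _ | n
  · have hvanish (m : ℕ) (hm : m ≤ 1) : m.descFactorial (2 * (k + 1)) = 0 :=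
      Nat.descFactorial_eq_zero_iff_lt.2 (by omega)
    simp [hermiteKdF2Term, hvanish]
  have hpascal : ((n + 2).descFactorial (2 * k + 2) : ℝ) =
      (n + 1).descFactorial (2 * k + 2) + (2 * k + 2) * (n + 1) * n.descFactorial (2 * k) := by
    rw [Nat.succ_descFactorial_succ_eq_add (n + 1) (2 * k + 1),
      Nat.succ_descFactorial_succ n (2 * k)]
    push_cast
    ring
  have hpow : x * ((n + 1).descFactorial (2 * k + 2) * x ^ (n - (2 * k + 1)) : ℝ) =
      (n + 1).descFactorial (2 * k + 2) * x ^ (n - 2 * k) := by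
    rcases le_or_gt (2 * k + 2) (n + 1) with h | h
    · rw [show n - 2 * k = n - (2 * k + 1) + 1 by omega, pow_succ]
      ring
    · simp only [Nat.descFactorial_eq_zero_iff_lt.2 h, Nat.cast_zero, zero_mul, mul_zero]
  rw [hermiteKdF2Term, hermiteKdF2Term, hermiteKdF2Term, show 2 * (k + 1) = 2 * k + 2 by ring,
    show n + 1 + 1 - (2 * k + 2) = n - 2 * k by omega,
    show n + 1 - (2 * k + 2) = n - (2 * k + 1) by omega, hpascal, Nat.factorial_succ,
    Nat.add_sub_cancel]
  push_cast
  field_simp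
  linear_combination -y ^ (k + 1) * hpow

theorem hermiteKdF2_succ (n : ℕ) (x y : ℝ) :
    hermiteKdF2 (n + 1) x y = x * hermiteKdF2 n x y + 2 * y * n * hermiteKdF2 (n - 1) x y := by
  rw [hermiteKdF2_eq_sum_range (N := n + 2) (by omega),
    hermiteKdF2_eq_sum_range (N := n + 2) (by omega),
    hermiteKdF2_eq_sum_range (N := n + 1) (by omega), sum_range_succ', sum_range_succ' _ (n + 1)]
  simp_rw [hermiteKdF2Term_succ_succ]
  rw [sum_add_distrib, mul_add, mul_sum, mul_sum, hermiteKdF2Term_succ_zero]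
  ring

theorem hasDerivAt_hermiteKdF2_mul_exp (n : ℕ) (a b x : ℝ) :
    HasDerivAt (fun t => hermiteKdF2 n (2 * a * t + b) a * Real.exp (a * t ^ 2 + b * t))
      (hermiteKdF2 (n + 1) (2 * a * x + b) a * Real.exp (a * x ^ 2 + b * x)) x := by
  have hlin : HasDerivAt (fun t => 2 * a * t + b) (2 * a) x := by
    simpa using ((hasDerivAt_id x).const_mul (2 * a)).add_const b
  have hquad : HasDerivAt (fun t => a * t ^ 2 + b * t) (2 * a * x + b) x := by
    refine (((hasDerivAt_pow 2 x).const_mul a).add ((hasDerivAt_id x).const_mul b)).congr_deriv ?_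
    push_cast
    ring
  have hH := (hasDerivAt_hermiteKdF2 n (2 * a * x + b) a).comp x hlin
  refine (hH.mul hquad.exp).congr_deriv ?_
  rw [Function.comp_apply, hermiteKdF2_succ]
  ring

theorem iteratedDeriv_exp_quadratic (a b x : ℝ) (n : ℕ) :
    iteratedDeriv n (fun t => Real.exp (a * t ^ 2 + b * t)) x =
      hermiteKdF2 n (2 * a * x + b) a * Real.exp (a * x ^ 2 + b * x) := by
  induction n generalizing x with
  | zero => simp [hermiteKdF2]
  | succ n ih =>
    rw [iteratedDeriv_succ, funext ih]
    exact (hasDerivAt_hermiteKdF2_mul_exp n a b x).deriv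
end

section
/- Let f : ℝ → ℝ be smooth and let n ≥ 1. Then for every real x ≠ 0, dⁿ/dxⁿ [f(1/x)] = (−1)ⁿ (n−1)! · Σ_{k=0}^{n−1} C(n, k) · x^{k−2n} / (n−k−1)! · f^{(n−k)}(1/x). -/
open Finset

lemma hasDerivAt_iter_inv (f : ℝ → ℝ) (hf : ContDiff ℝ (⊤ : ℕ∞) f) (k : ℕ) {x : ℝ} (hx : x ≠ 0) :
    HasDerivAt (fun t => iteratedDeriv k f (1 / t))
      (iteratedDeriv (k + 1) f (1 / x) * (-(x ^ 2)⁻¹)) x := by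
  have h1 : HasDerivAt (fun t : ℝ => 1 / t) (-(x ^ 2)⁻¹) x := by
    simpa [one_div] using hasDerivAt_inv hx
  have h2 : HasDerivAt (iteratedDeriv k f) (iteratedDeriv (k + 1) f (1 / x)) (1 / x) := by
    rw [iteratedDeriv_succ]
    exact ((hf.differentiable_iteratedDeriv k (by exact_mod_cast lt_top_iff_ne_top.2 (by simp))) (1 / x)).hasDerivAt
  exact h2.comp x h1

lemma nat_ident (m k : ℕ) (hk : k + 2 ≤ m) :
    (m : ℤ) * Nat.choose (m+1) (k+1) = Nat.choose m k * (2*(m:ℤ) - k) + Nat.choose m (k+1) * ((m:ℤ) - k - 1) := by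
  have h1 := Nat.choose_succ_right_eq m k
  have h2 : Nat.choose (m+1) (k+1) = Nat.choose m k + Nat.choose m (k+1) := Nat.choose_succ_succ _ _
  zify [show k ≤ m by omega] at h1
  have h2' : ((m+1).choose (k+1) : ℤ) = Nat.choose m k + Nat.choose m (k+1) := by exact_mod_cast h2
  rw [h2']; linear_combination h1

lemma key (f : ℝ → ℝ) (hf : ContDiff ℝ (⊤ : ℕ∞) f) :
    ∀ n : ℕ, 1 ≤ n → ∀ x : ℝ, x ≠ 0 →
    iteratedDeriv n (fun t => f (1 / t)) x =
      (-1 : ℝ) ^ n * ((n - 1).factorial : ℝ) *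
        ∑ k ∈ Finset.range n,
          (n.choose k : ℝ) * x ^ ((k : ℤ) - 2 * n) / ((n - k - 1).factorial : ℝ) *
            iteratedDeriv (n - k) f (1 / x) := by
  intro n
  induction n with
  | zero => omega
  | succ m ih =>
    intro _ x hx
    rcases Nat.eq_zero_or_pos m with rfl | hm
    · -- base case n = 1
      have h := hasDerivAt_iter_inv f hf 0 hx
      simp only [iteratedDeriv_zero, zero_add] at h
      rw [show (0:ℕ)+1 = 1 from rfl, iteratedDeriv_one, h.deriv]
      simp only [Finset.sum_range_one]
      norm_num
      ring
    · -- inductive step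
      rw [iteratedDeriv_succ]
      have hev : (iteratedDeriv m fun t => f (1 / t)) =ᶠ[nhds x]
          (fun t => (-1 : ℝ) ^ m * ((m - 1).factorial : ℝ) *
            ∑ k ∈ Finset.range m,
              (m.choose k : ℝ) * t ^ ((k : ℤ) - 2 * m) / ((m - k - 1).factorial : ℝ) *
                iteratedDeriv (m - k) f (1 / t)) := by
        filter_upwards [IsOpen.mem_nhds isOpen_ne hx] with t ht
        exact ih hm t ht
      rw [hev.deriv_eq]
      have hterm : ∀ k ∈ Finset.range m, HasDerivAt
          (fun t : ℝ => (m.choose k : ℝ) * t ^ ((k : ℤ) - 2 * m) / ((m - k - 1).factorial : ℝ) *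
              iteratedDeriv (m - k) f (1 / t))
          ((m.choose k : ℝ) * (((k : ℤ) - 2 * m : ℤ) : ℝ) * x ^ ((k : ℤ) - 2 * m - 1) /
              ((m - k - 1).factorial : ℝ) * iteratedDeriv (m - k) f (1 / x)
            + (m.choose k : ℝ) * x ^ ((k : ℤ) - 2 * m) / ((m - k - 1).factorial : ℝ) *
              (iteratedDeriv (m - k + 1) f (1 / x) * (-(x ^ 2)⁻¹))) x := by
        intro k _
        have h1 := ((hasDerivAt_zpow ((k : ℤ) - 2 * m) x (Or.inl hx)).const_mul
          ((m.choose k : ℝ))).div_const ((m - k - 1).factorial : ℝ)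
        have h2 := h1.mul (hasDerivAt_iter_inv f hf (m - k) hx)
        exact h2.congr_deriv (by ring)
      have hsum := (HasDerivAt.fun_sum hterm).const_mul ((-1 : ℝ) ^ m * ((m - 1).factorial : ℝ))
      rw [hsum.deriv]
      obtain ⟨p, rfl⟩ : ∃ p, m = p + 1 := ⟨m - 1, by omega⟩
      simp only [Nat.add_sub_cancel]
      rw [Finset.mul_sum, Finset.mul_sum]
      simp only [mul_add]
      rw [Finset.sum_add_distrib]
      conv_lhs => rw [Finset.sum_range_succ, Finset.sum_range_succ']
      conv_rhs => rw [Finset.sum_range_succ', Finset.sum_range_succ]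
      have h0 : (-1:ℝ) ^ (p + 1) * ↑p.factorial *
          (↑((p + 1).choose 0) * x ^ ((↑(0:ℕ):ℤ) - 2 * ((p+1:ℕ):ℤ)) / (((p + 1 - 0 - 1).factorial :ℕ): ℝ) *
            (iteratedDeriv (p + 1 - 0 + 1) f (1 / x) * -(x ^ 2)⁻¹)) =
          (-1:ℝ) ^ (p + 1 + 1) * ↑(p + 1).factorial *
          (↑((p + 1 + 1).choose 0) * x ^ ((↑(0:ℕ):ℤ) - 2 * ((p+1+1:ℕ):ℤ)) / (((p + 1 + 1 - 0 - 1).factorial :ℕ): ℝ) *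
            iteratedDeriv (p + 1 + 1 - 0) f (1 / x)) := by
        simp only [Nat.choose_zero_right, Nat.cast_one, Nat.sub_zero, Nat.add_sub_cancel,
          Nat.factorial_succ]
        rw [show ((↑(0:ℕ):ℤ) - 2 * ((p+1+1:ℕ):ℤ)) = ((↑(0:ℕ):ℤ) - 2 * ((p+1:ℕ):ℤ)) + (-2 : ℤ) by
            push_cast; ring,
          zpow_add₀ hx, show (x ^ (-2:ℤ)) = (x^2)⁻¹ by rw [zpow_neg]; norm_cast]
        push_cast
        field_simp
        ring
      have hp : (-1:ℝ) ^ (p + 1) * ↑p.factorial *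
          (↑((p + 1).choose p) * (((p:ℤ) - 2 * ((p+1:ℕ):ℤ) :ℤ):ℝ) * x ^ ((p:ℤ) - 2 * ((p+1:ℕ):ℤ) - 1) / (((p + 1 - p - 1).factorial :ℕ):ℝ) *
            iteratedDeriv (p + 1 - p) f (1 / x)) =
          (-1:ℝ) ^ (p + 1 + 1) * ↑(p + 1).factorial *
          (↑((p + 1 + 1).choose (p + 1)) * x ^ (((p+1:ℕ):ℤ) - 2 * ((p+1+1:ℕ):ℤ)) / (((p + 1 + 1 - (p + 1) - 1).factorial :ℕ):ℝ) *
            iteratedDeriv (p + 1 + 1 - (p + 1)) f (1 / x)) := by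
        simp only [Nat.add_sub_cancel_left, Nat.choose_succ_self_right, Nat.factorial_succ]
        norm_num
        rw [show ((p:ℤ) + 1 - 2 * ((p:ℤ) + 1 + 1)) = ((p:ℤ) - 2 * ((p:ℤ) + 1) - 1) by ring]
        ring
      have hsum2 : (∑ k ∈ Finset.range p, (-1:ℝ) ^ (p + 1) * ↑p.factorial *
            (↑((p + 1).choose k) * (((k:ℤ) - 2 * ((p+1:ℕ):ℤ) :ℤ):ℝ) * x ^ ((k:ℤ) - 2 * ((p+1:ℕ):ℤ) - 1) /
                (((p + 1 - k - 1).factorial :ℕ):ℝ) *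
              iteratedDeriv (p + 1 - k) f (1 / x)))
          + (∑ k ∈ Finset.range p, (-1:ℝ) ^ (p + 1) * ↑p.factorial *
            (↑((p + 1).choose (k + 1)) * x ^ (((k+1:ℕ):ℤ) - 2 * ((p+1:ℕ):ℤ)) / (((p + 1 - (k + 1) - 1).factorial :ℕ):ℝ) *
              (iteratedDeriv (p + 1 - (k + 1) + 1) f (1 / x) * -(x ^ 2)⁻¹)))
          = ∑ k ∈ Finset.range p, (-1:ℝ) ^ (p + 1 + 1) * ↑(p + 1).factorial *
            (↑((p + 1 + 1).choose (k + 1)) * x ^ (((k+1:ℕ):ℤ) - 2 * ((p+1+1:ℕ):ℤ)) /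
                (((p + 1 + 1 - (k + 1) - 1).factorial :ℕ):ℝ) *
              iteratedDeriv (p + 1 + 1 - (k + 1)) f (1 / x)) := by
        rw [← Finset.sum_add_distrib]
        refine Finset.sum_congr rfl fun k hk => ?_
        rw [Finset.mem_range] at hk
        have e1 : p + 1 - k - 1 = p - k := by omega
        have e2 : p + 1 - (k+1) - 1 = p - k - 1 := by omega
        have e3 : p + 1 - (k+1) + 1 = p + 1 - k := by omega
        have e4 : p + 1 + 1 - (k+1) - 1 = p - k := by omega
        have e5 : p + 1 + 1 - (k+1) = p + 1 - k := by omega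
        rw [e1, e2, e3, e4, e5]
        rw [show (((k+1:ℕ):ℤ) - 2 * ((p+1+1:ℕ):ℤ)) = ((k:ℤ) - 2*((p+1:ℕ):ℤ) - 1) by
          push_cast; ring]
        rw [show (((k+1:ℕ):ℤ) - 2 * ((p+1:ℕ):ℤ)) = ((k:ℤ) - 2*((p+1:ℕ):ℤ) - 1) + 2 by
            push_cast; ring,
          zpow_add₀ hx, show (x ^ (2:ℤ)) = x^(2:ℕ) by norm_cast]
        have hnat : (p - k).factorial = (p - k) * (p - k - 1).factorial := by
          obtain ⟨d, hd⟩ : ∃ d, p - k = d + 1 := ⟨p - k - 1, by omega⟩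
          rw [hd]; simp [Nat.factorial_succ]
        have hfac : ((p - k).factorial : ℝ) = ((p:ℝ) - k) * ((p - k - 1).factorial : ℝ) := by
          rw [hnat, Nat.cast_mul, Nat.cast_sub (by omega : k ≤ p)]
        have hident : ((p:ℝ)+1) * ((p+2).choose (k+1)) =
            ((p+1).choose k) * (2*((p:ℝ)+1) - k) + ((p+1).choose (k+1)) * (((p:ℝ)+1) - k - 1) := by
          exact_mod_cast nat_ident (p+1) k (by omega)
        have hpk : (p:ℝ) - k ≠ 0 := by
          have : (k:ℝ) < p := by exact_mod_cast hk
          linarith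
        simp only [show p+1+1 = p+2 by omega]
        rw [hfac, Nat.factorial_succ (p), Nat.cast_mul]
        push_cast
        field_simp [hpk]
        linear_combination ((-1 : ℝ) ^ (p + 1) * iteratedDeriv (p + 1 - k) f (1 / x)) * hident
      linarith [h0, hp, hsum2]

theorem iteratedDeriv_comp_inv (f : ℝ → ℝ) (hf : ContDiff ℝ (⊤ : ℕ∞) f)
    (n : ℕ) (hn : 1 ≤ n) (x : ℝ) (hx : x ≠ 0) :
    iteratedDeriv n (fun t => f (1 / t)) x =
      (-1 : ℝ) ^ n * ((n - 1).factorial : ℝ) *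
        ∑ k ∈ Finset.range n,
          (n.choose k : ℝ) * x ^ ((k : ℤ) - 2 * n) / ((n - k - 1).factorial : ℝ) *
            iteratedDeriv (n - k) f (1 / x) := by
  exact key f hf n hn x hx
end

section
/- For all real ξ, c, t with |ξ t| < 1, exp(−ξ² t c / (1 + ξ t)) = Σ_{n=0}^{∞} tⁿ · ( L_n(ξ² c, −ξ) + ξ · L_{n−1}(ξ² c, −ξ) ), where by convention L_{−1}(x, y) = 0 and the series on the left converges. -/
/-!
Since `tⁿ L_n(x, y) = ∑ₖ C(n, k) ((-x t)ᵏ / k!) (y t)ⁿ⁻ᵏ`, the series `∑ tⁿ L_n(x, y)` is the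
binomial transform of the exponential series. Summing the absolutely convergent double series
over `k` last, with `∑ₘ C(m + k, k) uᵐ = (1 - u)⁻⁽ᵏ⁺¹⁾`, gives the generating function
`exp (-x t / (1 - y t)) / (1 - y t)`. At `y = -ξ` the terms `ξ L_{n-1}` add `ξ t` times the same
series, which cancels the factor `1 / (1 + ξ t)`.
-/

open Finset

/-- The two-variable Laguerre polynomials. -/
noncomputable def laguerre2 (n : ℕ) (x y : ℝ) : ℝ :=
  (n.factorial : ℝ) * ∑ k ∈ Finset.range (n + 1),
    (-1 : ℝ) ^ k * x ^ k * y ^ (n - k) /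
      (((n - k).factorial : ℝ) * (k.factorial : ℝ) ^ 2)

theorem HasSum.sum_antidiagonal {α A : Type*} [AddCommMonoid α] [TopologicalSpace α]
    [ContinuousAdd α] [RegularSpace α] [AddMonoid A] [HasAntidiagonal A]
    {f : A × A → α} {a : α} (hf : HasSum f a) :
    HasSum (fun n => ∑ p ∈ antidiagonal n, f p) a :=
  (HasAntidiagonal.sigmaAntidiagonalEquivProd.hasSum_iff.2 hf).sigma fun n =>
    (sum_coe_sort (antidiagonal n) f) ▸ hasSum_fintype _

theorem hasSum_sum_range_choose_mul_pow {𝕜 : Type*} [NormedField 𝕜] [CompleteSpace 𝕜]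
    {a : ℕ → 𝕜} {u : 𝕜} (hu : ‖u‖ < 1)
    (ha : Summable fun k => ‖a k‖ / (1 - ‖u‖) ^ (k + 1)) :
    HasSum (fun n => ∑ k ∈ range (n + 1), (n.choose k : 𝕜) * a k * u ^ (n - k))
      (∑' k, a k / (1 - u) ^ (k + 1)) := by
  set F : ℕ × ℕ → 𝕜 := fun p => a p.1 * ((p.2 + p.1).choose p.1 * u ^ p.2)
  have hfiber (k : ℕ) : HasSum (fun m => F (k, m)) (a k / (1 - u) ^ (k + 1)) := by
    simpa only [mul_one_div] using (hasSum_choose_mul_geometric_of_norm_lt_one k hu).mul_left (a k)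
  have hu_norm : ‖‖u‖‖ < 1 := by rwa [norm_norm]
  have hnorm_fiber (k : ℕ) : HasSum (fun m => ‖a k‖ * ((m + k).choose k * ‖u‖ ^ m))
      (‖a k‖ / (1 - ‖u‖) ^ (k + 1)) := by
    simpa only [mul_one_div] using
      (hasSum_choose_mul_geometric_of_norm_lt_one k hu_norm).mul_left ‖a k‖
  have hF : Summable F := by
    refine Summable.of_norm_bounded
      (g := fun p : ℕ × ℕ => ‖a p.1‖ * ((p.2 + p.1).choose p.1 * ‖u‖ ^ p.2)) ?_ fun p => ?_
    · refine (summable_prod_of_nonneg fun p => by positivity).2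
        ⟨fun k => (hnorm_fiber k).summable, ha.congr fun k => (hnorm_fiber k).tsum_eq.symm⟩
    · rw [norm_mul, norm_mul, norm_pow]
      gcongr
      simpa using Nat.norm_cast_le (α := 𝕜) ((p.2 + p.1).choose p.1)
  have hsum : HasSum F (∑' k, a k / (1 - u) ^ (k + 1)) := by
    rw [(hF.hasSum.prod_fiberwise hfiber).tsum_eq]
    exact hF.hasSum
  refine hsum.sum_antidiagonal.congr_fun fun n => ?_
  rw [Nat.sum_antidiagonal_eq_sum_range_succ_mk]
  refine sum_congr rfl fun k hk => ?_
  simp only [F, Nat.sub_add_cancel (mem_range_succ_iff.1 hk)]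
  ring

theorem pow_mul_laguerre2 (n : ℕ) (x y t : ℝ) :
    t ^ n * laguerre2 n x y = ∑ k ∈ range (n + 1),
      (n.choose k : ℝ) * ((-(x * t)) ^ k / k.factorial) * (y * t) ^ (n - k) := by
  rw [laguerre2, mul_sum, mul_sum]
  refine sum_congr rfl fun k hk => ?_
  have hkn : k ≤ n := mem_range_succ_iff.1 hk
  rw [Nat.cast_choose ℝ hkn, ← Nat.sub_add_cancel hkn, pow_add, mul_pow, neg_pow,
    Nat.add_sub_cancel]
  field_simp
  ring

theorem hasSum_pow_mul_laguerre2 (x y t : ℝ) (h : |y * t| < 1) :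
    HasSum (fun n => t ^ n * laguerre2 n x y)
      (Real.exp (-(x * t) / (1 - y * t)) / (1 - y * t)) := by
  have hpos : 0 < 1 - y * t := by linarith [le_abs_self (y * t)]
  have hexp : HasSum (fun k => (-(x * t)) ^ k / k.factorial / (1 - y * t) ^ (k + 1))
      (Real.exp (-(x * t) / (1 - y * t)) / (1 - y * t)) := by
    refine (Real.exp_eq_exp_ℝ ▸ NormedSpace.expSeries_div_hasSum_exp
      (-(x * t) / (1 - y * t))).div_const (1 - y * t) |>.congr_fun fun k => ?_
    rw [div_pow, pow_succ]
    field_simp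
  have hnorm : Summable fun k => ‖(-(x * t)) ^ k / k.factorial‖ / (1 - ‖y * t‖) ^ (k + 1) := by
    refine ((Real.summable_pow_div_factorial (|x * t| / (1 - |y * t|))).div_const
      (1 - |y * t|)).congr fun k => ?_
    have : 0 < 1 - |y * t| := by linarith
    rw [Real.norm_eq_abs, Real.norm_eq_abs, abs_div, abs_pow, abs_neg, Nat.abs_cast, div_pow,
      pow_succ]
    field_simp
  simpa only [pow_mul_laguerre2, hexp.tsum_eq] using
    hasSum_sum_range_choose_mul_pow (by rwa [Real.norm_eq_abs]) hnorm

theorem HasSum.pow_mul_shift {R : Type*} [Semiring R] [TopologicalSpace R]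
    [IsTopologicalSemiring R] {f : ℕ → R} {t s : R} (h : HasSum (fun n => t ^ n * f n) s) :
    HasSum (fun n => t ^ n * if n = 0 then 0 else f (n - 1)) (t * s) := by
  simpa using HasSum.zero_add (f := fun n => t ^ n * if n = 0 then 0 else f (n - 1))
    (by simpa [pow_succ', mul_assoc] using h.mul_left t)

theorem laguerre2_exp_expansion (ξ c t : ℝ) (h : |ξ * t| < 1) :
    HasSum
      (fun n : ℕ => t ^ n *
        (laguerre2 n (ξ ^ 2 * c) (-ξ) +
          ξ * (if n = 0 then 0 else laguerre2 (n - 1) (ξ ^ 2 * c) (-ξ))))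
      (Real.exp (-(ξ ^ 2 * t * c) / (1 + ξ * t))) := by
  have hL := hasSum_pow_mul_laguerre2 (ξ ^ 2 * c) (-ξ) t (by rwa [neg_mul, abs_neg])
  have hpos : 0 < 1 + ξ * t := by linarith [neg_abs_le (ξ * t)]
  convert hL.add (hL.pow_mul_shift.mul_left ξ) using 1
  · funext n
    ring
  · rw [neg_mul, sub_neg_eq_add, mul_right_comm _ c t]
    field_simp
end
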